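/- arXiv:1902.09433 — 6 statements merged into one kernel-verified Lean document; each statement's English description precedes it below -/
import Mathlib

section
/- Let β > 0. There exist constants 0 < c ≤ C (depending only on β) such that for all v ∈ ℝ³: c·(1 + ‖v‖) ≤ λ(v) ≤ C·(1 + ‖v‖). In particular λ is bounded away from 0 and has linear growth for large ‖v‖. -/
open MeasureTheory

noncomputable section

abbrev E3 := EuclideanSpace ℝ (Fin 3)

/-- The Maxwellian density with inverse temperature `β` on `ℝ³`. -/
def Mβ (β : ℝ) (v : E3) : ℝ :=
  (β / (2 * Real.pi)) ^ ((3 : ℝ) / 2) * Real.exp (-(β / 2) * ‖v‖ ^ 2)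

/-- The collision frequency `λ(v) = π ∫ M_β(w) ‖v − w‖ dw`. -/
def lam (β : ℝ) (v : E3) : ℝ := Real.pi * ∫ w : E3, Mβ β w * ‖v - w‖

/-! Write `L(v) = ∫ M(w) ‖v - w‖ dw`, with mass `N = ∫ M` and first moment `K = ∫ M(w) ‖w‖ dw`.
The triangle inequality gives `|L(v) - K| ≤ N ‖v‖`, so `L(v) ≤ K + N ‖v‖` and `L(v) ≥ K - N ‖v‖`.
Since `M` is even, `∫ M(w) w dw = 0`, and Jensen's inequality `‖∫ M(w) (v - w) dw‖ ≤ L(v)` gives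
`L(v) ≥ N ‖v‖`. Averaging the two lower bounds, `L(v) ≥ K / 2`, and then
`L(v) ≥ (K / 2 + N ‖v‖) / 2` is a linear lower bound. -/

section WeightedDistance

variable {E : Type*} [NormedAddCommGroup E] [MeasurableSpace E] {μ : Measure E} {f : E → ℝ}

theorem integral_smul_self_eq_zero_of_even [NormedSpace ℝ E] [MeasurableNeg E] [μ.IsNegInvariant]
    (hf : ∀ w, f (-w) = f w) : ∫ w, f w • w ∂μ = 0 := by
  have h := integral_neg_eq_self (fun w => f w • w) μ
  simp only [hf, smul_neg, integral_neg] at h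
  have htwice : (2 : ℝ) • ∫ w, f w • w ∂μ = 0 := by
    rw [two_smul]
    nth_rewrite 1 [← h]
    exact neg_add_cancel _
  simpa using htwice

variable [OpensMeasurableSpace E]

theorem MeasureTheory.Integrable.mul_norm_sub (hf : Integrable f μ)
    (hfw : Integrable (fun w => f w * ‖w‖) μ) (v : E) :
    Integrable (fun w => f w * ‖v - w‖) μ := by
  refine ((hf.norm.mul_const ‖v‖).add hfw.norm).mono'
    (hf.aestronglyMeasurable.mul (by fun_prop : Continuous fun w => ‖v - w‖).aestronglyMeasurable)
    (ae_of_all _ fun w => ?_)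
  simp only [norm_mul, norm_norm]
  calc ‖f w‖ * ‖v - w‖ ≤ ‖f w‖ * (‖v‖ + ‖w‖) := by gcongr; exact norm_sub_le v w
    _ = ‖f w‖ * ‖v‖ + ‖f w‖ * ‖w‖ := mul_add _ _ _

theorem abs_integral_mul_norm_sub_sub_le (hf0 : 0 ≤ f) (hf : Integrable f μ)
    (hfw : Integrable (fun w => f w * ‖w‖) μ) (v : E) :
    |∫ w, f w * ‖v - w‖ ∂μ - ∫ w, f w * ‖w‖ ∂μ| ≤ (∫ w, f w ∂μ) * ‖v‖ := by
  rw [← integral_sub (hf.mul_norm_sub hfw v) hfw, ← integral_mul_const]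
  refine abs_integral_le_integral_abs.trans
    (integral_mono_of_nonneg (ae_of_all _ fun _ => abs_nonneg _) (hf.mul_const _)
      (ae_of_all _ fun w => ?_))
  calc |f w * ‖v - w‖ - f w * ‖w‖| = f w * |‖v - w‖ - ‖-w‖| := by
        rw [← mul_sub, abs_mul, abs_of_nonneg (hf0 w), norm_neg]
    _ ≤ f w * ‖v‖ := by
        gcongr
        · exact hf0 w
        · simpa using abs_norm_sub_norm_le (v - w) (-w)

variable [NormedSpace ℝ E] [CompleteSpace E] [SecondCountableTopology E]

theorem integral_mul_norm_le_integral_mul_norm_sub (hf0 : 0 ≤ f) (hf : Integrable f μ)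
    (hfw : Integrable (fun w => f w * ‖w‖) μ) (hmean : ∫ w, f w • w ∂μ = 0) (v : E) :
    (∫ w, f w ∂μ) * ‖v‖ ≤ ∫ w, f w * ‖v - w‖ ∂μ := by
  have hfw' : Integrable (fun w => f w • w) μ :=
    hfw.mono' (hf.aestronglyMeasurable.smul continuous_id.aestronglyMeasurable)
      (ae_of_all _ fun w => by simp [norm_smul, abs_of_nonneg (hf0 w)])
  have hmass : ∫ w, f w • (v - w) ∂μ = (∫ w, f w ∂μ) • v := by
    simp only [smul_sub]
    rw [integral_sub (hf.smul_const v) hfw', hmean, integral_smul_const, sub_zero]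
  calc (∫ w, f w ∂μ) * ‖v‖ = ‖∫ w, f w • (v - w) ∂μ‖ := by
        rw [hmass, norm_smul, Real.norm_of_nonneg (integral_nonneg hf0)]
    _ ≤ ∫ w, ‖f w • (v - w)‖ ∂μ := norm_integral_le_integral_norm _
    _ = ∫ w, f w * ‖v - w‖ ∂μ := by simp only [norm_smul, Real.norm_of_nonneg (hf0 _)]

theorem exists_linear_growth_integral_mul_norm_sub (hf0 : 0 ≤ f) (hf : Integrable f μ)
    (hfw : Integrable (fun w => f w * ‖w‖) μ) (hmean : ∫ w, f w • w ∂μ = 0)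
    (hmass : 0 < ∫ w, f w ∂μ) (hmoment : 0 < ∫ w, f w * ‖w‖ ∂μ) :
    ∃ c C : ℝ, 0 < c ∧ c ≤ C ∧ ∀ v : E,
      c * (1 + ‖v‖) ≤ ∫ w, f w * ‖v - w‖ ∂μ ∧ ∫ w, f w * ‖v - w‖ ∂μ ≤ C * (1 + ‖v‖) := by
  set N := ∫ w, f w ∂μ
  set K := ∫ w, f w * ‖w‖ ∂μ
  refine ⟨min N (K / 2) / 2, max N K, by positivity, ?_, fun v => ?_⟩
  · linarith [min_le_left N (K / 2), le_max_left N K]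
  have hjensen := integral_mul_norm_le_integral_mul_norm_sub hf0 hf hfw hmean v
  have htriangle := abs_le.mp (abs_integral_mul_norm_sub_sub_le hf0 hf hfw v)
  have hmin : min N (K / 2) * ‖v‖ ≤ N * ‖v‖ := by gcongr; exact min_le_left _ _
  have hmax : N * ‖v‖ ≤ max N K * ‖v‖ := by gcongr; exact le_max_left _ _
  constructor
  · nlinarith [min_le_right N (K / 2)]
  · nlinarith [le_max_right N K]

end WeightedDistance

theorem integrable_exp_neg_mul_sq_norm {V : Type*} [NormedAddCommGroup V] [InnerProductSpace ℝ V]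
    [FiniteDimensional ℝ V] [MeasurableSpace V] [BorelSpace V] {b : ℝ} (hb : 0 < b) :
    Integrable (fun v : V => Real.exp (-b * ‖v‖ ^ 2)) := by
  have h := (GaussianFourier.integrable_cexp_neg_mul_sq_norm_add (V := V) (b := b)
    (by simpa using hb) 0 0).norm
  simpa [Complex.norm_exp, ← Complex.ofReal_pow] using h

theorem mul_exp_neg_mul_sq_le {b : ℝ} (hb : 0 < b) (x : ℝ) :
    x * Real.exp (-b * x ^ 2) ≤ (1 + 2 / b) * Real.exp (-(b / 2) * x ^ 2) := by
  have hx : x ≤ (1 + 2 / b) * Real.exp (b / 2 * x ^ 2) :=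
    calc x ≤ (1 + 2 / b) * (b / 2 * x ^ 2 + 1) := by
          have : (1 + 2 / b) * (b / 2 * x ^ 2 + 1) = 1 + x ^ 2 + (b / 2 * x ^ 2 + 2 / b) := by
            field_simp
            ring
          rw [this]
          nlinarith [sq_nonneg (x - 1), sq_nonneg x, div_pos two_pos hb]
      _ ≤ (1 + 2 / b) * Real.exp (b / 2 * x ^ 2) := by
          gcongr
          exact Real.add_one_le_exp _
  calc x * Real.exp (-b * x ^ 2)
      ≤ (1 + 2 / b) * Real.exp (b / 2 * x ^ 2) * Real.exp (-b * x ^ 2) := by gcongr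
    _ = (1 + 2 / b) * Real.exp (-(b / 2) * x ^ 2) := by
        rw [mul_assoc, ← Real.exp_add]
        ring_nf

theorem integrable_exp_neg_mul_sq_norm_mul_norm {V : Type*} [NormedAddCommGroup V]
    [InnerProductSpace ℝ V] [FiniteDimensional ℝ V] [MeasurableSpace V] [BorelSpace V] {b : ℝ}
    (hb : 0 < b) : Integrable (fun v : V => Real.exp (-b * ‖v‖ ^ 2) * ‖v‖) := by
  refine ((integrable_exp_neg_mul_sq_norm (half_pos hb)).const_mul (1 + 2 / b)).mono'
    (by fun_prop) (ae_of_all _ fun v => ?_)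
  rw [Real.norm_of_nonneg (by positivity), mul_comm]
  exact mul_exp_neg_mul_sq_le hb ‖v‖

theorem Mβ_pos {β : ℝ} (hβ : 0 < β) (w : E3) : 0 < Mβ β w := by
  have : 0 < β / (2 * Real.pi) := by positivity
  unfold Mβ
  positivity

theorem Mβ_neg (β : ℝ) (w : E3) : Mβ β (-w) = Mβ β w := by
  simp only [Mβ, norm_neg]

theorem continuous_Mβ (β : ℝ) : Continuous (Mβ β) := by
  unfold Mβ
  fun_prop

theorem integrable_Mβ {β : ℝ} (hβ : 0 < β) : Integrable (Mβ β) :=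
  (integrable_exp_neg_mul_sq_norm (half_pos hβ)).const_mul _

theorem integrable_Mβ_mul_norm {β : ℝ} (hβ : 0 < β) : Integrable (fun w => Mβ β w * ‖w‖) := by
  simpa only [Mβ, mul_assoc] using
    (integrable_exp_neg_mul_sq_norm_mul_norm (V := E3) (half_pos hβ)).const_mul
      ((β / (2 * Real.pi)) ^ ((3 : ℝ) / 2))

/-- There exist constants `0 < c ≤ C` (depending only on `β`) such that
`c·(1 + ‖v‖) ≤ λ(v) ≤ C·(1 + ‖v‖)` for all `v`: the collision frequency is bounded away
from zero and has linear growth. -/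
theorem lam_linear_growth (β : ℝ) (hβ : 0 < β) :
    ∃ c C : ℝ, 0 < c ∧ c ≤ C ∧
      ∀ v : E3, c * (1 + ‖v‖) ≤ lam β v ∧ lam β v ≤ C * (1 + ‖v‖) := by
  have hM0 : 0 ≤ Mβ β := fun w => (Mβ_pos hβ w).le
  have hmass : 0 < ∫ w, Mβ β w :=
    integral_pos_of_integrable_nonneg_nonzero (x := 0) (continuous_Mβ β) (integrable_Mβ hβ) hM0
      (Mβ_pos hβ 0).ne'
  obtain ⟨e, he⟩ := exists_ne (0 : E3)
  have hmoment : 0 < ∫ w, Mβ β w * ‖w‖ :=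
    integral_pos_of_integrable_nonneg_nonzero (x := e) ((continuous_Mβ β).mul continuous_norm)
      (integrable_Mβ_mul_norm hβ) (fun w => mul_nonneg (hM0 w) (norm_nonneg w))
      (mul_ne_zero (Mβ_pos hβ e).ne' (norm_ne_zero_iff.mpr he))
  obtain ⟨c, C, hc, hcC, hbounds⟩ := exists_linear_growth_integral_mul_norm_sub hM0
    (integrable_Mβ hβ) (integrable_Mβ_mul_norm hβ)
    (integral_smul_self_eq_zero_of_even (Mβ_neg β)) hmass hmoment
  refine ⟨Real.pi * c, Real.pi * C, by positivity, by gcongr, fun v => ?_⟩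
  obtain ⟨hlower, hupper⟩ := hbounds v
  simp only [lam, mul_assoc]
  exact ⟨by gcongr, by gcongr⟩
end
end

section
/- Let β > 0. There exists a constant C > 0 (depending only on β) such that for all v ∈ ℝ³: ∫_{ℝ³} e(v,v')/‖v'−v‖ dv' ≤ C·(1 + ‖v‖), where the integrand is extended by 0 at v' = v. -/
open MeasureTheory

noncomputable section

/-- `e(v,v') = (β/(2π))^(1/2) · exp(−(β/2)·((v'·(v'−v))/‖v'−v‖)²)`, the integral of `M_β`
over the plane `E(v,v')`. -/
def eFun (β : ℝ) (v v' : E3) : ℝ :=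
  (β / (2 * Real.pi)) ^ ((1 : ℝ) / 2) *
    Real.exp (-(β / 2) * ((inner ℝ v' (v' - v) : ℝ) / ‖v' - v‖) ^ 2)

/-!
Translate to `v' = v + r σ` and use polar coordinates. Along the ray in direction `σ`, with
`a = ⟪v, σ⟫` and `c = (β/2π)^(1/2)`, the integrand times the Jacobian `r²` equals
`c r exp(-(β/2)(r + a)²)`. Writing `r ≤ |r + a| + ‖v‖` and absorbing `|s|` into half of the
Gaussian (`|s| exp(-βs²/4) ≤ 2/√β`), this is at most `c (2/√β + ‖v‖) exp(-(β/4)(r + a)²)`,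
whose integral is linear in `‖v‖` uniformly in `σ`. Integrating over the sphere only multiplies
by its finite measure.
-/

open Set Metric Real
open scoped ENNReal

section Polar

variable {E : Type*} [NormedAddCommGroup E] [NormedSpace ℝ E] [FiniteDimensional ℝ E]
  [Nontrivial E] [MeasurableSpace E] [BorelSpace E] (μ : Measure E) [μ.IsAddHaarMeasure]

theorem lintegral_eq_lintegral_toSphere_lintegral_Ioi {f : E → ℝ≥0∞} (hf : Measurable f) :
    ∫⁻ x, f x ∂μ = ∫⁻ σ : sphere (0 : E) 1,
      (∫⁻ r in Ioi (0 : ℝ), ENNReal.ofReal (r ^ (Module.finrank ℝ E - 1)) * f (r • (σ : E)))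
        ∂μ.toSphere := by
  set g : sphere (0 : E) 1 × Ioi (0 : ℝ) → ℝ≥0∞ :=
    fun p => f ((homeomorphUnitSphereProd E).symm p) with hg
  have hg_meas : Measurable g :=
    hf.comp (continuous_subtype_val.comp (homeomorphUnitSphereProd E).symm.continuous).measurable
  calc ∫⁻ x, f x ∂μ = ∫⁻ x : ({0}ᶜ : Set E), f x ∂μ.comap Subtype.val := by
        rw [lintegral_subtype_comap (measurableSet_singleton 0).compl, restrict_compl_singleton]
    _ = ∫⁻ p, g p ∂(μ.toSphere.prod (Measure.volumeIoiPow (Module.finrank ℝ E - 1))) := by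
        rw [← (Measure.measurePreserving_homeomorphUnitSphereProd μ).lintegral_comp hg_meas]
        simp only [hg, Homeomorph.symm_apply_apply]
    _ = _ := by
        rw [lintegral_prod _ hg_meas.aemeasurable]
        refine lintegral_congr fun σ => ?_
        have hgσ : Measurable fun r => g (σ, r) := hg_meas.comp measurable_prodMk_left
        rw [Measure.volumeIoiPow, lintegral_withDensity_eq_lintegral_mul _ (by fun_prop) hgσ,
          ← lintegral_subtype_comap measurableSet_Ioi]
        simp only [hg, Pi.mul_apply, homeomorphUnitSphereProd_symm_apply_coe]

theorem lintegral_le_mul_toSphere_of_forall_radial_le {f : E → ℝ≥0∞} (hf : Measurable f)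
    {B : ℝ≥0∞} (hB : ∀ σ ∈ sphere (0 : E) 1,
      ∫⁻ r in Ioi (0 : ℝ), ENNReal.ofReal (r ^ (Module.finrank ℝ E - 1)) * f (r • σ) ≤ B) :
    ∫⁻ x, f x ∂μ ≤ B * μ.toSphere univ := by
  rw [lintegral_eq_lintegral_toSphere_lintegral_Ioi μ hf, ← lintegral_const]
  exact lintegral_mono fun σ => hB σ σ.2

end Polar

section Gaussian

theorem abs_mul_exp_neg_mul_sq_le {b : ℝ} (hb : 0 < b) (s : ℝ) :
    |s| * exp (-b * s ^ 2) ≤ 1 / √b := by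
  have hsqrt : 0 < √b := sqrt_pos.mpr hb
  have hsq : (√b * |s|) ^ 2 = b * s ^ 2 := by rw [mul_pow, sq_sqrt hb.le, sq_abs]
  have hlin : √b * |s| ≤ exp (b * s ^ 2) := by
    nlinarith [add_one_le_exp (b * s ^ 2), sq_nonneg (√b * |s| - 1)]
  rw [neg_mul, exp_neg, ← div_eq_mul_inv, div_le_div_iff₀ (exp_pos _) hsqrt]
  linarith

theorem mul_exp_neg_two_mul_sq_add_le {b : ℝ} (hb : 0 < b) (r a : ℝ) :
    r * exp (-(2 * b) * (r + a) ^ 2) ≤ (1 / √b + |a|) * exp (-b * (r + a) ^ 2) := by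
  set e := exp (-b * (r + a) ^ 2)
  have he : 0 ≤ e := (exp_pos _).le
  have he_le_one : e ≤ 1 := exp_le_one_iff.mpr (by nlinarith [sq_nonneg (r + a)])
  have hsplit : exp (-(2 * b) * (r + a) ^ 2) = e * e := by rw [← exp_add]; ring_nf
  have hr : r ≤ |r + a| + |a| := by linarith [le_abs_self (r + a), neg_abs_le a]
  calc r * exp (-(2 * b) * (r + a) ^ 2)
      ≤ (|r + a| * e) * e + |a| * e * e := by rw [hsplit]; nlinarith [mul_nonneg he he]
    _ ≤ 1 / √b * e + |a| * e * 1 := by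
        gcongr
        exact abs_mul_exp_neg_mul_sq_le hb _
    _ = (1 / √b + |a|) * e := by ring

theorem lintegral_exp_neg_mul_sq_add {b : ℝ} (hb : 0 < b) (a : ℝ) :
    ∫⁻ t, ENNReal.ofReal (exp (-b * (t + a) ^ 2)) = ENNReal.ofReal √(π / b) := by
  rw [lintegral_add_right_eq_self (fun t => ENNReal.ofReal (exp (-b * t ^ 2))) a,
    ← ofReal_integral_eq_lintegral_ofReal (integrable_exp_neg_mul_sq hb)
      (ae_of_all _ fun _ => (exp_pos _).le), integral_gaussian]

end Gaussian

section Kernel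

variable {β : ℝ}

@[fun_prop]
theorem measurable_eFun (v : E3) : Measurable (eFun β v) := by
  unfold eFun
  fun_prop

theorem eFun_smul_add_div_norm {r : ℝ} (hr : 0 < r) {σ : E3} (hσ : ‖σ‖ = 1) (v : E3) :
    eFun β v (r • σ + v) / ‖r • σ‖ =
      (β / (2 * π)) ^ ((1 : ℝ) / 2) * exp (-(β / 2) * (r + inner ℝ v σ) ^ 2) / r := by
  have hnorm : ‖r • σ‖ = r := by rw [norm_smul, hσ, mul_one, norm_of_nonneg hr.le]
  have hinner : inner ℝ (r • σ + v) (r • σ + v - v) / ‖r • σ + v - v‖ = r + inner ℝ v σ := by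
    simp only [add_sub_cancel_right, hnorm, inner_add_left, real_inner_smul_right,
      real_inner_self_eq_norm_sq, real_inner_comm σ v]
    field_simp
  rw [eFun, hinner, hnorm]

theorem lintegral_Ioi_sq_mul_eFun_le (hβ : 0 < β) (v : E3) {σ : E3} (hσ : ‖σ‖ = 1) :
    ∫⁻ r in Ioi (0 : ℝ), ENNReal.ofReal (r ^ 2) * ENNReal.ofReal (eFun β v (r • σ + v) / ‖r • σ‖)
      ≤ ENNReal.ofReal ((β / (2 * π)) ^ ((1 : ℝ) / 2) * (1 / √(β / 4) + ‖v‖) * √(π / (β / 4))) := by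
  set c := (β / (2 * π)) ^ ((1 : ℝ) / 2)
  set A := c * (1 / √(β / 4) + ‖v‖)
  set a := inner ℝ v σ
  have hc : 0 ≤ c := by positivity
  have ha : |a| ≤ ‖v‖ := by simpa [hσ] using abs_real_inner_le_norm v σ
  have hpt : ∀ r ∈ Ioi (0 : ℝ), ENNReal.ofReal (r ^ 2) *
      ENNReal.ofReal (eFun β v (r • σ + v) / ‖r • σ‖) ≤
        ENNReal.ofReal (A * exp (-(β / 4) * (r + a) ^ 2)) := by
    intro r (hr : 0 < r)
    rw [eFun_smul_add_div_norm hr hσ, ← ENNReal.ofReal_mul (by positivity)]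
    refine ENNReal.ofReal_le_ofReal ?_
    have hβ2 : -(β / 2) = -(2 * (β / 4)) := by ring
    calc r ^ 2 * (c * exp (-(β / 2) * (r + a) ^ 2) / r)
        = c * (r * exp (-(2 * (β / 4)) * (r + a) ^ 2)) := by rw [hβ2]; field_simp
      _ ≤ c * ((1 / √(β / 4) + |a|) * exp (-(β / 4) * (r + a) ^ 2)) :=
          mul_le_mul_of_nonneg_left (mul_exp_neg_two_mul_sq_add_le (by positivity) r a) hc
      _ ≤ c * ((1 / √(β / 4) + ‖v‖) * exp (-(β / 4) * (r + a) ^ 2)) := by gcongr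
      _ = A * exp (-(β / 4) * (r + a) ^ 2) := (mul_assoc ..).symm
  calc _ ≤ ∫⁻ r in Ioi (0 : ℝ), ENNReal.ofReal (A * exp (-(β / 4) * (r + a) ^ 2)) :=
        setLIntegral_mono (by fun_prop) hpt
    _ ≤ ∫⁻ r, ENNReal.ofReal (A * exp (-(β / 4) * (r + a) ^ 2)) := setLIntegral_le_lintegral _ _
    _ = ENNReal.ofReal A * ENNReal.ofReal √(π / (β / 4)) := by
        simp_rw [ENNReal.ofReal_mul (by positivity : 0 ≤ A)]
        rw [lintegral_const_mul _ (by fun_prop), lintegral_exp_neg_mul_sq_add (by positivity)]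
    _ = _ := by rw [← ENNReal.ofReal_mul (by positivity)]

end Kernel

/-- There is a constant `C > 0` (depending only on `β`) such that for all `v`,
`∫ e(v,v')/‖v'−v‖ dv' ≤ C (1 + ‖v‖)` (the integrand extended by `0` at `v' = v`,
which is automatic by the convention `x/0 = 0`). -/
theorem carleman_kernel_linear_bound (β : ℝ) (hβ : 0 < β) :
    ∃ C : ℝ, 0 < C ∧ ∀ v : E3,
      (∫⁻ v' : E3, ENNReal.ofReal (eFun β v v' / ‖v' - v‖)) ≤
        ENNReal.ofReal (C * (1 + ‖v‖)) := by
  set c := (β / (2 * π)) ^ ((1 : ℝ) / 2)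
  set k := 1 / √(β / 4)
  set I := √(π / (β / 4))
  set S := (volume : Measure E3).toSphere univ
  have hS : 0 < S.toReal := ENNReal.toReal_pos
    (Measure.measure_univ_ne_zero.mpr (Measure.toSphere_ne_zero _)) (measure_ne_top _ _)
  refine ⟨c * (k + 1) * I * S.toReal, by positivity, fun v => ?_⟩
  set f : E3 → ℝ≥0∞ := fun w => ENNReal.ofReal (eFun β v (w + v) / ‖w‖)
  have hf : Measurable f := by fun_prop
  have hradial : ∀ σ ∈ sphere (0 : E3) 1, ∫⁻ r in Ioi (0 : ℝ),
      ENNReal.ofReal (r ^ (Module.finrank ℝ E3 - 1)) * f (r • σ) ≤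
        ENNReal.ofReal (c * (k + ‖v‖) * I) := by
    intro σ hσ
    rw [finrank_euclideanSpace_fin]
    exact lintegral_Ioi_sq_mul_eFun_le hβ v (mem_sphere_zero_iff_norm.mp hσ)
  calc ∫⁻ v', ENNReal.ofReal (eFun β v v' / ‖v' - v‖) = ∫⁻ w, f w := by
        simp only [f, ← lintegral_sub_right_eq_self f v, sub_add_cancel]
    _ ≤ ENNReal.ofReal (c * (k + ‖v‖) * I) * S :=
        lintegral_le_mul_toSphere_of_forall_radial_le volume hf hradial
    _ = ENNReal.ofReal (c * (k + ‖v‖) * I * S.toReal) := by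
        rw [ENNReal.ofReal_mul (by positivity : 0 ≤ c * (k + ‖v‖) * I),
          ENNReal.ofReal_toReal (measure_ne_top _ _)]
    _ ≤ ENNReal.ofReal (c * (k + 1) * I * S.toReal * (1 + ‖v‖)) := by
        refine ENNReal.ofReal_le_ofReal ?_
        have hk : 0 ≤ k := by positivity
        have hv := norm_nonneg v
        have hcIS : 0 ≤ c * I * S.toReal := by positivity
        nlinarith [mul_nonneg hcIS (mul_nonneg hk hv)]
end
end

section
/- Let β > 0. There exists a constant C̃ > 0 (depending only on β) such that for every natural number k and every v ∈ ℝ³: ∫_{{v' ∈ ℝ³ : ‖v'‖ ≥ 2‖v‖}} (1+‖v'‖)^k · e(v,v')/‖v'−v‖ dv' ≤ C̃^(k+1) · Γ(k/2 + 2), where Γ is the Gamma function and the integrand is extended by 0 at v' = v. -/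
open MeasureTheory

noncomputable section

/-!
If `‖v'‖ ≥ 2‖v‖`, then `‖v' - v‖ ≥ ‖v'‖ / 2` and the component of `v'` along `v' - v` is at
least `‖v'‖ / 3`, so `e(v,v') ≤ c · exp(-a‖v'‖²)` with `c = (β/(2π))^(1/2)` and `a = β/18`.
With `(1 + r)^k ≤ 2^k (1 + r^k)` the integrand is dominated by
`2^(k+1) c (‖v'‖⁻¹ + ‖v'‖^(k-1)) exp(-a‖v'‖²)`, whose integral over `ℝ³` is, in polar
coordinates, a sum of two Gaussian moments
`∫₀^∞ r^(q+2) exp(-a r²) dr = a^(-(q+3)/2) Γ((q+3)/2) / 2`, one with `Γ(1)` and one with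
`Γ(k/2 + 1) ≤ Γ(k/2 + 2)`. The powers of `2` and `a^(-1/2)` are absorbed into `C̃^(k+1)`.
-/

open Real Set Module Metric

lemma norm_le_two_mul_norm_sub_of_two_mul_norm_le {E : Type*} [SeminormedAddCommGroup E]
    {v w : E} (h : 2 * ‖v‖ ≤ ‖w‖) : ‖w‖ ≤ 2 * ‖w - v‖ := by
  linarith [norm_sub_norm_le w v]

lemma norm_le_three_mul_inner_div_norm_sub {E : Type*} [NormedAddCommGroup E]
    [InnerProductSpace ℝ E] {v w : E} (h : 2 * ‖v‖ ≤ ‖w‖) :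
    ‖w‖ ≤ 3 * (inner ℝ w (w - v) / ‖w - v‖) := by
  rcases eq_or_ne w v with rfl | hwv
  · have : ‖w‖ = 0 := by linarith [norm_nonneg w]
    simp [this]
  have hpos : 0 < ‖w - v‖ := norm_pos_iff.mpr (sub_ne_zero.mpr hwv)
  have hinner : ‖w‖ ^ 2 / 2 ≤ inner ℝ w (w - v) := by
    rw [inner_sub_right, real_inner_self_eq_norm_sq]
    nlinarith [real_inner_le_norm w v, norm_nonneg v]
  have hsub : ‖w - v‖ ≤ 3 / 2 * ‖w‖ := by linarith [norm_sub_le w v, norm_nonneg v]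
  rw [mul_div_assoc', le_div_iff₀ hpos]
  nlinarith [norm_nonneg w]

lemma pow_pred_smul_rpow_mul_eqOn {n : ℕ} (hn : n ≠ 0) (q : ℝ) (g : ℝ → ℝ) :
    EqOn (fun y : ℝ => y ^ (n - 1) • (y ^ q * g y)) (fun y => y ^ (q + n - 1) * g y)
      (Ioi 0) := fun y (hy : 0 < y) => by
  dsimp only
  rw [smul_eq_mul, ← mul_assoc, ← rpow_natCast, ← rpow_add hy,
    Nat.cast_sub (Nat.one_le_iff_ne_zero.mpr hn)]
  ring_nf

section GaussianMoments

variable {E : Type*} [NormedAddCommGroup E] [NormedSpace ℝ E] [FiniteDimensional ℝ E]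
  [MeasurableSpace E] [BorelSpace E] [Nontrivial E] (μ : Measure E) [μ.IsAddHaarMeasure]
  {b q : ℝ}

lemma integrable_norm_rpow_mul_exp_neg_mul_sq (hb : 0 < b) (hq : -(finrank ℝ E : ℝ) < q) :
    Integrable (fun x : E => ‖x‖ ^ q * exp (-b * ‖x‖ ^ 2)) μ := by
  rw [integrable_fun_norm_addHaar μ (f := fun y => y ^ q * exp (-b * y ^ 2)),
    integrableOn_congr_fun (pow_pred_smul_rpow_mul_eqOn finrank_pos.ne' q _) measurableSet_Ioi]
  exact integrableOn_rpow_mul_exp_neg_mul_sq hb (by linarith)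

lemma integral_norm_rpow_mul_exp_neg_mul_sq (hb : 0 < b) (hq : -(finrank ℝ E : ℝ) < q) :
    ∫ x, ‖x‖ ^ q * exp (-b * ‖x‖ ^ 2) ∂μ = finrank ℝ E * μ.real (ball 0 1) / 2 *
      b ^ (-(q + finrank ℝ E) / 2) * Gamma ((q + finrank ℝ E) / 2) := by
  have hrad := integral_rpow_mul_exp_neg_mul_rpow two_pos
    (show -1 < q + finrank ℝ E - 1 by linarith) hb
  simp only [rpow_two, sub_add_cancel] at hrad
  rw [integral_fun_norm_addHaar μ (fun y => y ^ q * exp (-b * y ^ 2)),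
    setIntegral_congr_fun measurableSet_Ioi (pow_pred_smul_rpow_mul_eqOn finrank_pos.ne' q _), hrad,
    nsmul_eq_mul, smul_eq_mul]
  ring

end GaussianMoments

lemma eFun_le_of_two_mul_norm_le {β : ℝ} (hβ : 0 ≤ β) {v v' : E3} (h : 2 * ‖v‖ ≤ ‖v'‖) :
    eFun β v v' ≤ (β / (2 * π)) ^ ((1 : ℝ) / 2) * exp (-(β / 18) * ‖v'‖ ^ 2) := by
  have hproj := norm_le_three_mul_inner_div_norm_sub h
  refine mul_le_mul_of_nonneg_left (exp_le_exp.2 ?_) (by positivity)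
  nlinarith [mul_le_mul_of_nonneg_left (pow_le_pow_left₀ (norm_nonneg v') hproj 2) hβ]

lemma large_velocity_integrand_le {β : ℝ} (hβ : 0 ≤ β) {v v' : E3} (h : 2 * ‖v‖ ≤ ‖v'‖) (k : ℕ) :
    (1 + ‖v'‖) ^ k * eFun β v v' / ‖v' - v‖ ≤ 2 ^ (k + 1) * (β / (2 * π)) ^ ((1 : ℝ) / 2) *
      ((‖v'‖ ^ (-1 : ℝ) + ‖v'‖ ^ ((k : ℝ) - 1)) * exp (-(β / 18) * ‖v'‖ ^ 2)) := by
  rcases eq_or_ne v' v with rfl | hne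
  · rw [sub_self, norm_zero, div_zero]
    positivity
  have hsub := norm_le_two_mul_norm_sub_of_two_mul_norm_le h
  have hr : 0 < ‖v'‖ := by
    have := norm_pos_iff.mpr (sub_ne_zero.mpr hne)
    linarith [norm_sub_le v' v]
  have hbinom : (1 + ‖v'‖) ^ k ≤ 2 ^ k * (1 + ‖v'‖ ^ k) := by
    calc (1 + ‖v'‖) ^ k ≤ 2 ^ (k - 1) * (1 ^ k + ‖v'‖ ^ k) := add_pow_le zero_le_one hr.le k
      _ ≤ 2 ^ k * (1 + ‖v'‖ ^ k) := by
        rw [one_pow]; gcongr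
        exacts [one_le_two, Nat.sub_le k 1]
  calc (1 + ‖v'‖) ^ k * eFun β v v' / ‖v' - v‖
      ≤ (1 + ‖v'‖) ^ k * ((β / (2 * π)) ^ ((1 : ℝ) / 2) * exp (-(β / 18) * ‖v'‖ ^ 2)) /
          (‖v'‖ / 2) := by
        gcongr
        exacts [eFun_le_of_two_mul_norm_le hβ h, by linarith]
    _ = 2 * (1 + ‖v'‖) ^ k * ‖v'‖ ^ (-1 : ℝ) *
          ((β / (2 * π)) ^ ((1 : ℝ) / 2) * exp (-(β / 18) * ‖v'‖ ^ 2)) := by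
        rw [rpow_neg_one]
        field_simp
    _ ≤ 2 * (2 ^ k * (1 + ‖v'‖ ^ k)) * ‖v'‖ ^ (-1 : ℝ) *
          ((β / (2 * π)) ^ ((1 : ℝ) / 2) * exp (-(β / 18) * ‖v'‖ ^ 2)) := by
        gcongr
    _ = _ := by
        rw [rpow_sub_one hr.ne', rpow_natCast, rpow_neg_one]
        ring

lemma lintegral_large_velocity_moment_le {β : ℝ} (hβ : 0 < β) (k : ℕ) (v : E3) :
    ∫⁻ v' in {v' : E3 | 2 * ‖v‖ ≤ ‖v'‖},
        ENNReal.ofReal ((1 + ‖v'‖) ^ k * eFun β v v' / ‖v' - v‖) ≤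
      ENNReal.ofReal ((β / (2 * π)) ^ ((1 : ℝ) / 2) * (3 * volume.real (ball (0 : E3) 1) / 2) *
        2 ^ (k + 1) * ((β / 18) ^ (-1 : ℝ) +
          (β / 18) ^ (-((k : ℝ) + 2) / 2) * Gamma ((k : ℝ) / 2 + 1))) := by
  have ha : 0 < β / 18 := by positivity
  have hdim : (finrank ℝ E3 : ℝ) = 3 := by simp
  have hint₁ := integrable_norm_rpow_mul_exp_neg_mul_sq (volume : Measure E3) ha
    (q := -1) (by rw [hdim]; norm_num)
  have hint₂ := integrable_norm_rpow_mul_exp_neg_mul_sq (volume : Measure E3) ha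
    (q := (k : ℝ) - 1) (by rw [hdim]; linarith [k.cast_nonneg (α := ℝ)])
  set g : E3 → ℝ := fun v' => 2 ^ (k + 1) * (β / (2 * π)) ^ ((1 : ℝ) / 2) *
    (‖v'‖ ^ (-1 : ℝ) * exp (-(β / 18) * ‖v'‖ ^ 2) +
      ‖v'‖ ^ ((k : ℝ) - 1) * exp (-(β / 18) * ‖v'‖ ^ 2)) with hg
  calc ∫⁻ v' in {v' : E3 | 2 * ‖v‖ ≤ ‖v'‖},
          ENNReal.ofReal ((1 + ‖v'‖) ^ k * eFun β v v' / ‖v' - v‖)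
      ≤ ∫⁻ v' in {v' : E3 | 2 * ‖v‖ ≤ ‖v'‖}, ENNReal.ofReal (g v') :=
        setLIntegral_mono' (measurableSet_le measurable_const measurable_norm) fun v' hv' =>
          ENNReal.ofReal_le_ofReal ((large_velocity_integrand_le hβ.le hv' k).trans_eq (by ring))
    _ ≤ ∫⁻ v', ENNReal.ofReal (g v') := setLIntegral_le_lintegral _ _
    _ = ENNReal.ofReal (∫ v', g v') :=
        (ofReal_integral_eq_lintegral_ofReal ((hint₁.add hint₂).const_mul _)
          (ae_of_all _ fun _ => by simp only [Pi.zero_apply, Pi.add_apply]; positivity)).symm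
    _ = _ := by
        rw [hg, integral_const_mul, integral_add hint₁ hint₂,
          integral_norm_rpow_mul_exp_neg_mul_sq _ ha (by rw [hdim]; norm_num),
          integral_norm_rpow_mul_exp_neg_mul_sq _ ha
            (by rw [hdim]; linarith [k.cast_nonneg (α := ℝ)]),
          hdim, show (-1 + 3 : ℝ) / 2 = 1 by norm_num, Gamma_one,
          show ((k : ℝ) - 1 + 3) / 2 = k / 2 + 1 by ring,
          show -((k : ℝ) - 1 + 3) / 2 = -(k + 2) / 2 by ring]
        ring_nf

lemma mul_pow_le_max_one_mul_pow {A x : ℝ} (hx : 0 ≤ x) (n : ℕ) :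
    A * x ^ (n + 1) ≤ (max 1 A * x) ^ (n + 1) := by
  rw [mul_pow]
  gcongr
  exact (le_max_right 1 A).trans (le_self_pow₀ (le_max_left 1 A) n.succ_ne_zero)

lemma one_add_Gamma_add_one_le {x : ℝ} (hx : 0 ≤ x) : 1 + Gamma (x + 1) ≤ 2 * Gamma (x + 2) := by
  have hrec : Gamma (x + 2) = (x + 1) * Gamma (x + 1) := by
    rw [show x + 2 = x + 1 + 1 by ring, Gamma_add_one (by linarith)]
  have hpos : 0 < Gamma (x + 1) := Gamma_pos_of_pos (by linarith)
  have hone : 1 ≤ Gamma (x + 2) := by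
    rw [← Gamma_two]
    exact Gamma_strictMonoOn_Ici.monotoneOn (mem_Ici.2 le_rfl) (mem_Ici.2 (by linarith))
      (by linarith)
  nlinarith

lemma rpow_neg_half_le_max_one_pow {a : ℝ} (ha : 0 < a) {m n : ℕ} (hmn : m ≤ n) :
    a ^ (-(m : ℝ) / 2) ≤ max 1 (a ^ (-(1 : ℝ) / 2)) ^ n := by
  rw [show -(m : ℝ) / 2 = -(1 : ℝ) / 2 * m by ring, rpow_mul ha.le, rpow_natCast]
  calc (a ^ (-(1 : ℝ) / 2)) ^ m ≤ max 1 (a ^ (-(1 : ℝ) / 2)) ^ m := by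
        gcongr
        exact le_max_right _ _
    _ ≤ max 1 (a ^ (-(1 : ℝ) / 2)) ^ n := pow_le_pow_right₀ (le_max_left _ _) hmn

lemma exists_gaussian_moments_le_pow_mul_Gamma {a K : ℝ} (ha : 0 < a) (hK : 0 ≤ K) :
    ∃ C > 0, ∀ k : ℕ,
      K * 2 ^ (k + 1) * (a ^ (-1 : ℝ) + a ^ (-((k : ℝ) + 2) / 2) * Gamma ((k : ℝ) / 2 + 1)) ≤
        C ^ (k + 1) * Gamma ((k : ℝ) / 2 + 2) := by
  set D := max 1 (a ^ (-(1 : ℝ) / 2))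
  have hD : 1 ≤ D := le_max_left _ _
  refine ⟨max 1 (2 * K * D) * (2 * D), by positivity, fun k => ?_⟩
  have h₁ : a ^ (-1 : ℝ) ≤ D ^ (k + 2) := by
    simpa using rpow_neg_half_le_max_one_pow ha (m := 2) (n := k + 2) (by omega)
  have h₂ : a ^ (-((k : ℝ) + 2) / 2) ≤ D ^ (k + 2) := by
    simpa using rpow_neg_half_le_max_one_pow ha (m := k + 2) le_rfl
  have hΓ : 0 ≤ Gamma ((k : ℝ) / 2 + 1) := (Gamma_pos_of_pos (by positivity)).le
  calc K * 2 ^ (k + 1) * (a ^ (-1 : ℝ) + a ^ (-((k : ℝ) + 2) / 2) * Gamma ((k : ℝ) / 2 + 1))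
      ≤ K * 2 ^ (k + 1) * (D ^ (k + 2) * (1 + Gamma ((k : ℝ) / 2 + 1))) := by
        gcongr
        linarith [mul_le_mul_of_nonneg_right h₂ hΓ]
    _ ≤ K * 2 ^ (k + 1) * (D ^ (k + 2) * (2 * Gamma ((k : ℝ) / 2 + 2))) := by
        gcongr
        exact one_add_Gamma_add_one_le (by positivity)
    _ = 2 * K * D * (2 * D) ^ (k + 1) * Gamma ((k : ℝ) / 2 + 2) := by ring
    _ ≤ (max 1 (2 * K * D) * (2 * D)) ^ (k + 1) * Gamma ((k : ℝ) / 2 + 2) := by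
        gcongr
        exact mul_pow_le_max_one_mul_pow (by positivity) k

/-- The integrand vanishes at `v' = v` through the convention `x / 0 = 0`. -/
theorem large_velocity_moment_bound (β : ℝ) (hβ : 0 < β) :
    ∃ Ct : ℝ, 0 < Ct ∧ ∀ (k : ℕ) (v : E3),
      (∫⁻ v' in {v' : E3 | 2 * ‖v‖ ≤ ‖v'‖},
          ENNReal.ofReal ((1 + ‖v'‖) ^ k * eFun β v v' / ‖v' - v‖)) ≤
        ENNReal.ofReal (Ct ^ (k + 1) * Real.Gamma ((k : ℝ) / 2 + 2)) := by
  obtain ⟨C, hC, hbound⟩ := exists_gaussian_moments_le_pow_mul_Gamma (a := β / 18)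
    (K := (β / (2 * π)) ^ ((1 : ℝ) / 2) * (3 * volume.real (ball (0 : E3) 1) / 2))
    (by positivity) (by positivity)
  exact ⟨C, hC, fun k v =>
    (lintegral_large_velocity_moment_le hβ k v).trans (ENNReal.ofReal_le_ofReal (hbound k))⟩
end
end

section
/- Let v, v₁ ∈ ℝ³ with v₁ ≠ v and ‖v‖ ≤ ‖v₁‖/2. Then v₁·(v₁ − v) ≥ (1/2)·‖v₁‖·‖v₁ − v‖. Consequently, for every β > 0, e(v, v₁) ≤ (β/(2π))^(1/2) · exp(−β·‖v₁‖²/8). -/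
open MeasureTheory

noncomputable section

section InnerProductSpace

variable {F : Type*} [NormedAddCommGroup F] [InnerProductSpace ℝ F]

/- Polarization gives `2⟪x, x - y⟫ = ‖x‖² + ‖x - y‖² - ‖y‖²`, and
`‖x‖² - ‖x‖‖x - y‖ + ‖x - y‖² ≥ 3‖x‖²/4 ≥ ‖y‖²`. -/
theorem half_norm_mul_norm_sub_le_inner_sub {x y : F} (h : ‖y‖ ≤ ‖x‖ / 2) :
    1 / 2 * ‖x‖ * ‖x - y‖ ≤ inner ℝ x (x - y) := by
  have polarization : 2 * inner ℝ x (x - y) = ‖x‖ ^ 2 + ‖x - y‖ ^ 2 - ‖y‖ ^ 2 := by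
    rw [inner_sub_right, real_inner_self_eq_norm_sq, norm_sub_sq_real]
    ring
  nlinarith [sq_nonneg (‖x - y‖ - ‖x‖ / 2), norm_nonneg y]

theorem sq_half_norm_le_sq_inner_sub_div_norm {x y : F} (h : ‖y‖ ≤ ‖x‖ / 2) :
    (‖x‖ / 2) ^ 2 ≤ (inner ℝ x (x - y) / ‖x - y‖) ^ 2 := by
  rcases eq_or_ne x y with rfl | hne
  -- the quotient is `0 / 0 = 0`, but then `‖x‖ ≤ ‖x‖ / 2` forces `x = 0`
  · have : ‖x‖ = 0 := by linarith [norm_nonneg x]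
    simp [this]
  have hpos : 0 < ‖x - y‖ := norm_pos_iff.mpr (sub_ne_zero.mpr hne)
  refine pow_le_pow_left₀ (by positivity) ?_ 2
  rw [le_div_iff₀ hpos]
  linarith [half_norm_mul_norm_sub_le_inner_sub h]

end InnerProductSpace

theorem eFun_gaussian_decay_general (v v₁ : E3) (hv : ‖v‖ ≤ ‖v₁‖ / 2) :
    (1 / 2) * ‖v₁‖ * ‖v₁ - v‖ ≤ (inner ℝ v₁ (v₁ - v) : ℝ) ∧
    ∀ β : ℝ, 0 < β →
      eFun β v v₁ ≤ (β / (2 * Real.pi)) ^ ((1 : ℝ) / 2) *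
        Real.exp (-β * ‖v₁‖ ^ 2 / 8) := by
  refine ⟨half_norm_mul_norm_sub_le_inner_sub hv, fun β hβ => ?_⟩
  refine mul_le_mul_of_nonneg_left (Real.exp_le_exp.mpr ?_) (by positivity)
  nlinarith [sq_half_norm_le_sq_inner_sub_div_norm hv]

/-- If `v₁ ≠ v` and `‖v‖ ≤ ‖v₁‖/2` then `v₁·(v₁−v) ≥ (1/2)‖v₁‖‖v₁−v‖`, and consequently
`e(v,v₁) ≤ (β/(2π))^(1/2) · exp(−β‖v₁‖²/8)` for every `β > 0`. -/
theorem eFun_gaussian_decay (v v₁ : E3) (hne : v₁ ≠ v) (hv : ‖v‖ ≤ ‖v₁‖ / 2) :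
    (1 / 2) * ‖v₁‖ * ‖v₁ - v‖ ≤ (inner ℝ v₁ (v₁ - v) : ℝ) ∧
    ∀ β : ℝ, 0 < β →
      eFun β v v₁ ≤ (β / (2 * Real.pi)) ^ ((1 : ℝ) / 2) *
        Real.exp (-β * ‖v₁‖ ^ 2 / 8) :=
  eFun_gaussian_decay_general v v₁ hv
end
end

section
/- For all a, b, u ∈ ℝ³ and every r > 0: ∫_{B_r(u)} 1/(‖v−a‖·‖v−b‖) dv ≤ 4π·r, where B_r(u) = {v ∈ ℝ³ : ‖v−u‖ ≤ r} and the integral is with respect to Lebesgue measure (the integrand, defined almost everywhere, is integrable on B_r(u)). -/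
/-!
By AM-GM, `1/(‖v-a‖‖v-b‖) ≤ (‖v-a‖⁻² + ‖v-b‖⁻²)/2`, so it suffices to bound the integral of
`‖v-c‖⁻²` over the ball by `4πr`. Since `‖v-c‖⁻²` decreases with the distance to `c`, moving the
ball so that it is centred at `c` can only increase the integral (bathtub principle), and in
polar coordinates the centred integral is `∫₀ʳ 4π ρ² ρ⁻² dρ = 4πr`.
-/

open MeasureTheory Set Metric Module
open scoped ENNReal

theorem one_div_mul_le_inv_sq_add_inv_sq (x y : ℝ) :
    1 / (x * y) ≤ 2⁻¹ * ((x ^ 2)⁻¹ + (y ^ 2)⁻¹) := by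
  rw [one_div, mul_inv, ← inv_pow, ← inv_pow]
  nlinarith [sq_nonneg (x⁻¹ - y⁻¹)]

theorem setLIntegral_le_setLIntegral_of_measure_eq {α : Type*} [MeasurableSpace α]
    {μ : Measure α} {f : α → ℝ≥0∞} {s t : Set α} (c : ℝ≥0∞)
    (hs : MeasurableSet s) (ht : MeasurableSet t) (hμ : μ s = μ t) (hfin : μ (s ∩ t) ≠ ∞)
    (hf_out : ∀ᵐ x ∂μ, x ∈ s \ t → f x ≤ c) (hf_in : ∀ᵐ x ∂μ, x ∈ t \ s → c ≤ f x) :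
    ∫⁻ x in s, f x ∂μ ≤ ∫⁻ x in t, f x ∂μ := by
  have hsdiff : μ (s \ t) = μ (t \ s) :=
    measure_sdiff_symm hs.nullMeasurableSet ht.nullMeasurableSet hμ hfin
  calc ∫⁻ x in s, f x ∂μ = ∫⁻ x in s ∩ t, f x ∂μ + ∫⁻ x in s \ t, f x ∂μ :=
        (lintegral_inter_add_sdiff f s ht).symm
    _ ≤ ∫⁻ x in s ∩ t, f x ∂μ + ∫⁻ _ in s \ t, c ∂μ := by
        gcongr 1
        exact setLIntegral_mono_ae' (hs.diff ht) hf_out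
    _ = ∫⁻ x in t ∩ s, f x ∂μ + ∫⁻ _ in t \ s, c ∂μ := by
        rw [setLIntegral_const, setLIntegral_const, hsdiff, inter_comm]
    _ ≤ ∫⁻ x in t ∩ s, f x ∂μ + ∫⁻ x in t \ s, f x ∂μ := by
        gcongr 1
        exact setLIntegral_mono_ae' (ht.diff hs) hf_in
    _ = ∫⁻ x in t, f x ∂μ := lintegral_inter_add_sdiff f t hs

theorem setLIntegral_closedBall_le_setLIntegral_closedBall_center
    {E : Type*} [NormedAddCommGroup E] [ProperSpace E] [MeasurableSpace E] [BorelSpace E]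
    (μ : Measure E) [μ.IsAddHaarMeasure] [NullSingletonClass μ] {f : ℝ → ℝ≥0∞}
    (hf : AntitoneOn f (Ioi 0)) (u c : E) {r : ℝ} (hr : 0 < r) :
    ∫⁻ v in closedBall u r, f ‖v - c‖ ∂μ ≤ ∫⁻ v in closedBall c r, f ‖v - c‖ ∂μ := by
  refine setLIntegral_le_setLIntegral_of_measure_eq (f r) measurableSet_closedBall
    measurableSet_closedBall ?_ ?_ ?_ ?_
  · rw [Measure.addHaar_closedBall_center, Measure.addHaar_closedBall_center μ c]
  · exact (measure_mono inter_subset_left).trans_lt measure_closedBall_lt_top |>.ne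
  · refine .of_forall fun v ⟨_, hv⟩ => ?_
    have hv : r < ‖v - c‖ := by simpa [dist_eq_norm] using hv
    exact hf hr (hr.trans hv) hv.le
  · filter_upwards [compl_mem_ae_iff.mpr (measure_singleton (μ := μ) c)] with v hvc ⟨hv, _⟩
    have hv : ‖v - c‖ ≤ r := by simpa [dist_eq_norm] using hv
    have hvc : 0 < ‖v - c‖ := norm_pos_iff.mpr (sub_ne_zero.mpr hvc)
    exact hf hvc hr hv

theorem indicator_closedBall_comp_norm_sub {E F : Type*} [SeminormedAddCommGroup E] [Zero F]
    (f : ℝ → F) (c : E) (r : ℝ) :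
    (closedBall c r).indicator (fun v => f ‖v - c‖) = fun v => (Iic r).indicator f ‖v - c‖ := by
  ext v
  simp [indicator, dist_eq_norm]

section Radial

variable {E : Type*} [NormedAddCommGroup E] [NormedSpace ℝ E] [Nontrivial E]
  [FiniteDimensional ℝ E] [MeasurableSpace E] [BorelSpace E] (μ : Measure E) [μ.IsAddHaarMeasure]
  {F : Type*} [NormedAddCommGroup F] [NormedSpace ℝ F]

theorem integrableOn_closedBall_fun_norm_sub_iff {f : ℝ → F} (c : E) (r : ℝ) :
    IntegrableOn (fun v => f ‖v - c‖) (closedBall c r) μ ↔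
      IntegrableOn (fun y => y ^ (finrank ℝ E - 1) • f y) (Ioc 0 r) := by
  rw [← integrable_indicator_iff measurableSet_closedBall, indicator_closedBall_comp_norm_sub,
    ← Function.comp_def (fun v => (Iic r).indicator f ‖v‖),
    (measurePreserving_sub_right μ c).integrable_comp_emb (measurableEmbedding_subRight c),
    integrable_fun_norm_addHaar, ← indicator_smul, integrableOn_indicator_iff measurableSet_Iic,
    Iic_inter_Ioi]

theorem integral_closedBall_fun_norm_sub (f : ℝ → F) (c : E) (r : ℝ) :
    ∫ v in closedBall c r, f ‖v - c‖ ∂μ =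
      finrank ℝ E • μ.real (ball 0 1) • ∫ y in Ioc 0 r, y ^ (finrank ℝ E - 1) • f y := by
  rw [← integral_indicator measurableSet_closedBall, indicator_closedBall_comp_norm_sub,
    integral_sub_right_eq_self (fun v => (Iic r).indicator f ‖v‖) c, integral_fun_norm_addHaar,
    ← Ioi_inter_Iic, ← setIntegral_indicator measurableSet_Iic]
  simp_rw [indicator_smul]

end Radial

theorem pow_sub_one_smul_inv_sq_eqOn {n : ℕ} (hn : 3 ≤ n) :
    EqOn (fun y : ℝ => y ^ (n - 1) • (y ^ 2)⁻¹) (fun y => y ^ (n - 3)) (Ioi 0) := by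
  intro y hy
  obtain ⟨k, rfl⟩ := Nat.exists_eq_add_of_le' hn
  have hy : y ≠ 0 := (mem_Ioi.mp hy).ne'
  simp only [smul_eq_mul, Nat.add_sub_cancel, show k + 3 - 1 = k + 2 by omega]
  field_simp
  ring

theorem lintegral_closedBall_inv_sq_norm_sub {E : Type*} [NormedAddCommGroup E]
    [NormedSpace ℝ E] [FiniteDimensional ℝ E] [MeasurableSpace E] [BorelSpace E]
    (μ : Measure E) [μ.IsAddHaarMeasure] (hE : 3 ≤ finrank ℝ E) (c : E) {r : ℝ}
    (hr : 0 ≤ r) :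
    ∫⁻ v in closedBall c r, ENNReal.ofReal (‖v - c‖ ^ 2)⁻¹ ∂μ =
      ENNReal.ofReal (finrank ℝ E * μ.real (ball 0 1) * r ^ (finrank ℝ E - 2) /
        (finrank ℝ E - 2)) := by
  have : Nontrivial E := Module.nontrivial_of_finrank_pos (R := ℝ) (by omega)
  have hprofile : EqOn (fun y : ℝ => y ^ (finrank ℝ E - 1) • (y ^ 2)⁻¹)
      (fun y => y ^ (finrank ℝ E - 3)) (Ioc 0 r) :=
    (pow_sub_one_smul_inv_sq_eqOn hE).mono Ioc_subset_Ioi_self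
  have hint : IntegrableOn (fun v => (‖v - c‖ ^ 2)⁻¹) (closedBall c r) μ := by
    rw [integrableOn_closedBall_fun_norm_sub_iff μ (f := fun y : ℝ => (y ^ 2)⁻¹),
      integrableOn_congr_fun hprofile measurableSet_Ioc]
    exact (continuous_pow _).integrableOn_Ioc
  rw [← ofReal_integral_eq_lintegral_ofReal hint (.of_forall fun v => by positivity),
    integral_closedBall_fun_norm_sub μ (f := fun y : ℝ => (y ^ 2)⁻¹),
    setIntegral_congr_fun measurableSet_Ioc hprofile, ← intervalIntegral.integral_of_le hr,
    integral_pow]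
  obtain ⟨k, hk⟩ := Nat.exists_eq_add_of_le' hE
  rw [hk]
  congr 1
  simp only [nsmul_eq_mul, smul_eq_mul, Nat.add_sub_cancel, show k + 3 - 2 = k + 1 by omega]
  push_cast
  ring

theorem integrable_and_integral_le_of_lintegral_ofReal_le {α : Type*} [MeasurableSpace α]
    {μ : Measure α} {f : α → ℝ} (hf : Measurable f) (hf_nonneg : ∀ x, 0 ≤ f x) {C : ℝ}
    (hC : 0 ≤ C) (h : ∫⁻ x, ENNReal.ofReal (f x) ∂μ ≤ ENNReal.ofReal C) :
    Integrable f μ ∧ ∫ x, f x ∂μ ≤ C := by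
  have hf_ae : 0 ≤ᵐ[μ] f := .of_forall hf_nonneg
  refine ⟨⟨hf.aestronglyMeasurable, ?_⟩, ?_⟩
  · exact (hasFiniteIntegral_iff_ofReal hf_ae).mpr (h.trans_lt ENNReal.ofReal_lt_top)
  · rw [integral_eq_lintegral_of_nonneg_ae hf_ae hf.aestronglyMeasurable]
    exact ENNReal.toReal_le_of_le_ofReal hC h

theorem lintegral_closedBall_inv_sq_norm_sub_le (u c : E3) {r : ℝ} (hr : 0 < r) :
    ∫⁻ v in closedBall u r, ENNReal.ofReal (‖v - c‖ ^ 2)⁻¹ ≤ ENNReal.ofReal (4 * Real.pi * r) := by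
  have hanti : AntitoneOn (fun y : ℝ => ENNReal.ofReal (y ^ 2)⁻¹) (Ioi 0) :=
    fun x hx _ _ hxy =>
      ENNReal.ofReal_le_ofReal (inv_anti₀ (pow_pos hx 2) (pow_le_pow_left₀ hx.le hxy 2))
  have hball : volume.real (ball (0 : E3) 1) = 4 * Real.pi / 3 := by
    rw [Measure.real, EuclideanSpace.volume_ball_fin_three, ENNReal.ofReal_one, one_pow, one_mul,
      ENNReal.toReal_ofReal (by positivity)]
    ring
  calc _ ≤ ∫⁻ v in closedBall c r, ENNReal.ofReal (‖v - c‖ ^ 2)⁻¹ :=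
        setLIntegral_closedBall_le_setLIntegral_closedBall_center volume hanti u c hr
    _ = ENNReal.ofReal (4 * Real.pi * r) := by
        rw [lintegral_closedBall_inv_sq_norm_sub volume (by simp) c hr.le,
          finrank_euclideanSpace_fin, hball]
        congr 1
        push_cast
        ring

/-- For all `a, b, u ∈ ℝ³` and `r > 0`, the function `v ↦ 1/(‖v−a‖‖v−b‖)` is integrable on
the closed ball `B_r(u)` and its integral there is at most `4π r`. -/
theorem ball_double_singular_integral (a b u : E3) (r : ℝ) (hr : 0 < r) :
    IntegrableOn (fun v : E3 => 1 / (‖v - a‖ * ‖v - b‖)) (Metric.closedBall u r) ∧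
    (∫ v in Metric.closedBall u r, 1 / (‖v - a‖ * ‖v - b‖)) ≤ 4 * Real.pi * r := by
  refine integrable_and_integral_le_of_lintegral_ofReal_le (by fun_prop) (fun v => by positivity)
    (by positivity) ?_
  calc ∫⁻ v in closedBall u r, ENNReal.ofReal (1 / (‖v - a‖ * ‖v - b‖))
      ≤ ∫⁻ v in closedBall u r, ENNReal.ofReal 2⁻¹ *
          (ENNReal.ofReal (‖v - a‖ ^ 2)⁻¹ + ENNReal.ofReal (‖v - b‖ ^ 2)⁻¹) := by
        refine lintegral_mono fun v => ?_
        rw [← ENNReal.ofReal_add (by positivity) (by positivity),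
          ← ENNReal.ofReal_mul (by norm_num)]
        exact ENNReal.ofReal_le_ofReal (one_div_mul_le_inv_sq_add_inv_sq _ _)
    _ = ENNReal.ofReal 2⁻¹ * ((∫⁻ v in closedBall u r, ENNReal.ofReal (‖v - a‖ ^ 2)⁻¹) +
          ∫⁻ v in closedBall u r, ENNReal.ofReal (‖v - b‖ ^ 2)⁻¹) := by
        rw [lintegral_const_mul' _ _ ENNReal.ofReal_ne_top, lintegral_add_left (by fun_prop)]
    _ ≤ ENNReal.ofReal 2⁻¹ *
          (ENNReal.ofReal (4 * Real.pi * r) + ENNReal.ofReal (4 * Real.pi * r)) := by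
        gcongr <;> exact lintegral_closedBall_inv_sq_norm_sub_le _ _ hr
    _ = ENNReal.ofReal (4 * Real.pi * r) := by
        rw [← ENNReal.ofReal_add (by positivity) (by positivity),
          ← ENNReal.ofReal_mul (by norm_num)]
        congr 1
        ring
end

section
/- Let β > 0 and define Ψ_n(μ,t) as in the context. There exist constants C > 0 and c > 0 (depending only on β) such that for all μ > 0 and all t ≥ 0 with μ·t ≤ c, the tail series Σ_{n≥2} Ψ_n(μ,t) converges and Σ_{n≥2} Ψ_n(μ,t) ≤ C·(μ·t)². (The weight corresponding to at least two collisions of the stationary linear Boltzmann jump process up to time t is of order (μt)².) -/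
/-!
Detailed balance for the Maxwellian gives the pointwise bound
`√M(v) e(v,v') / ‖v' − v‖ ≤ √M(v') G(v' − v)` with `G(u) = c_β ‖u‖⁻¹ exp(−β‖u‖²/8)`,
which is integrable on `ℝ³`. Along a chain `v₀, …, vₙ` the factors `√M` telescope, so after
bounding the exponential damping by `1` and integrating out the increments `vᵢ − vᵢ₋₁` one gets
at most `sup √M / √M(v₀) · (∫ G)ⁿ`. The time simplex has volume at most `tⁿ` and
`∫ M(v₀) / √M(v₀) dv₀ = ∫ √M < ∞`, so `|Ψₙ(μ,t)| ≤ K (Γ μ t)ⁿ` with `Γ = ∫ G`, and for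
`Γ μ t ≤ 1/2` the tail `Σ_{n≥2} Ψₙ` is dominated by a geometric series of size `O((μt)²)`.
-/

open MeasureTheory

noncomputable section

/-- The full velocity vector `(v₀, v₁, …, vₙ)` obtained by prepending the initial
velocity `v₀` to the post-collisional velocities `w = (v₁, …, vₙ)`. -/
def consV {m : ℕ} (v₀ : E3) (w : Fin m → E3) : Fin (m + 1) → E3 := Fin.cons v₀ w

/-- The full time vector `(t₀, t₁, …, tₙ)` with `t₀ = t` and collision times
`τ = (t₁, …, tₙ)`. -/
def consT {m : ℕ} (t : ℝ) (τ : Fin m → ℝ) : Fin (m + 1) → ℝ := Fin.cons t τ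

/-- The weight `Ψ_n(μ,t)` of `n` collisions up to time `t` for the stationary linear
Boltzmann jump process: `Ψ_0(μ,t) = ∫ M_β(v₀) e^{−μλ(v₀)t} dv₀`, and for `n ≥ 1`,
`Ψ_n(μ,t) = μⁿ ∫ M_β(v₀) ∫_{0 ≤ tₙ ≤ ⋯ ≤ t₁ ≤ t} ∫_{(ℝ³)ⁿ}
   (Π_{i=1}^n e(v_{i−1},v_i)/‖v_i − v_{i−1}‖)
   e^{−μ(Σ_{i=0}^{n−1} λ(v_i)(t_i − t_{i+1}) + λ(v_n) tₙ)} dv dt dv₀` with `t₀ = t`. -/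
def Psi (β μ t : ℝ) : ℕ → ℝ
  | 0 => ∫ v₀ : E3, Mβ β v₀ * Real.exp (-(μ * lam β v₀ * t))
  | n + 1 =>
      μ ^ (n + 1) *
        ∫ v₀ : E3, Mβ β v₀ *
          ∫ τ in {τ : Fin (n + 1) → ℝ |
              (∀ i, 0 ≤ τ i ∧ τ i ≤ t) ∧ ∀ i j : Fin (n + 1), i ≤ j → τ j ≤ τ i},
            ∫ w : Fin (n + 1) → E3,
              (∏ i : Fin (n + 1),
                eFun β (consV v₀ w (Fin.castSucc i)) (consV v₀ w i.succ) /
                  ‖consV v₀ w i.succ - consV v₀ w (Fin.castSucc i)‖) *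
              Real.exp (-(μ *
                ((∑ i : Fin (n + 1),
                    lam β (consV v₀ w (Fin.castSucc i)) *
                      (consT t τ (Fin.castSucc i) - consT t τ i.succ)) +
                  lam β (consV v₀ w (Fin.last (n + 1))) *
                    consT t τ (Fin.last (n + 1)))))

open Real Set
open scoped ENNReal

/-- With `u = v' - v`, the gap is `(⟪v, u⟫ + ‖u‖² / 2)² / ‖u‖²`. -/
theorem detailed_balance_exponent_le {V : Type*} [NormedAddCommGroup V]
    [InnerProductSpace ℝ V] (v v' : V) :
    ‖v'‖ ^ 2 / 2 + ‖v' - v‖ ^ 2 / 4 ≤ ‖v‖ ^ 2 / 2 + (inner ℝ v' (v' - v) / ‖v' - v‖) ^ 2 := by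
  obtain ⟨u, rfl⟩ : ∃ u, v' = v + u := ⟨v' - v, by abel⟩
  rw [add_sub_cancel_left]
  rcases eq_or_ne u 0 with rfl | hu
  · simp
  have h : inner ℝ (v + u) u = inner ℝ v u + ‖u‖ ^ 2 := by
    rw [inner_add_left, real_inner_self_eq_norm_sq]
  have hr : 0 < ‖u‖ := norm_pos_iff.mpr hu
  have key : inner ℝ v u + 3 * ‖u‖ ^ 2 / 4 ≤ (inner ℝ v u + ‖u‖ ^ 2) ^ 2 / ‖u‖ ^ 2 := by
    rw [le_div_iff₀ (by positivity)]
    nlinarith [sq_nonneg (inner ℝ v u + ‖u‖ ^ 2 / 2)]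
  rw [h, norm_add_sq_real, div_pow]
  linarith

theorem integrable_norm_rpow_mul_exp_neg_mul_sq_norm {E : Type*} [NormedAddCommGroup E]
    [NormedSpace ℝ E] [FiniteDimensional ℝ E] [MeasurableSpace E] [BorelSpace E] [Nontrivial E]
    (μ : Measure E) [μ.IsAddHaarMeasure] {b s : ℝ} (hb : 0 < b)
    (hs : -(Module.finrank ℝ E : ℝ) < s) :
    Integrable (fun x : E => ‖x‖ ^ s * exp (-b * ‖x‖ ^ 2)) μ := by
  have hd : 1 ≤ Module.finrank ℝ E := Module.finrank_pos
  rw [integrable_fun_norm_addHaar μ (f := fun y => y ^ s * exp (-b * y ^ 2))]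
  refine (integrableOn_rpow_mul_exp_neg_mul_sq hb (s := (Module.finrank ℝ E - 1 : ℕ) + s)
    ?_).congr_fun (fun y (hy : 0 < y) => ?_) measurableSet_Ioi
  · push_cast [hd]
    linarith
  · dsimp only
    rw [rpow_add hy, rpow_natCast, smul_eq_mul, mul_assoc]

lemma finrank_E3 : (Module.finrank ℝ E3 : ℝ) = 3 := by simp

section Maxwellian

variable {β : ℝ}

lemma Mβ_nonneg (hβ : 0 < β) (v : E3) : 0 ≤ Mβ β v := by
  unfold Mβ
  positivity

lemma sqrt_Mβ (hβ : 0 < β) (v : E3) :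
    √(Mβ β v) = √((β / (2 * π)) ^ ((3 : ℝ) / 2)) * exp (-(β / 4) * ‖v‖ ^ 2) := by
  rw [Mβ, sqrt_mul (by positivity), ← exp_half]
  ring_nf

lemma sqrt_Mβ_pos (hβ : 0 < β) (v : E3) : 0 < √(Mβ β v) := by
  rw [sqrt_Mβ hβ]
  positivity

lemma sqrt_Mβ_le (hβ : 0 < β) (v : E3) : √(Mβ β v) ≤ √((β / (2 * π)) ^ ((3 : ℝ) / 2)) := by
  rw [sqrt_Mβ hβ]
  refine mul_le_of_le_one_right (by positivity) (exp_le_one_iff.mpr ?_)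
  have : 0 ≤ β / 4 * ‖v‖ ^ 2 := by positivity
  linarith

lemma integrable_sqrt_Mβ (hβ : 0 < β) : Integrable fun v : E3 => √(Mβ β v) := by
  simp_rw [sqrt_Mβ hβ]
  refine Integrable.const_mul ?_ _
  simpa using integrable_norm_rpow_mul_exp_neg_mul_sq_norm (volume : Measure E3)
    (by positivity : 0 < β / 4) (s := 0) (by rw [finrank_E3]; norm_num)

lemma eFun_nonneg (hβ : 0 < β) (v v' : E3) : 0 ≤ eFun β v v' := by
  unfold eFun
  positivity

lemma lam_nonneg (hβ : 0 < β) (v : E3) : 0 ≤ lam β v :=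
  mul_nonneg pi_pos.le <| integral_nonneg fun w => mul_nonneg (Mβ_nonneg hβ w) (norm_nonneg _)

end Maxwellian

/-- `‖u‖ ^ (-1 : ℝ)` is `‖u‖⁻¹`, also at `u = 0` where both are `0`. -/
def kernelMajorant (β : ℝ) (u : E3) : ℝ :=
  (β / (2 * π)) ^ ((1 : ℝ) / 2) * (‖u‖ ^ (-1 : ℝ) * exp (-(β / 8) * ‖u‖ ^ 2))

def kernelMass (β : ℝ) : ℝ := ∫ u, kernelMajorant β u

section Kernel

variable {β : ℝ}

lemma kernelMajorant_nonneg (hβ : 0 < β) (u : E3) : 0 ≤ kernelMajorant β u := by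
  unfold kernelMajorant
  positivity

lemma integrable_kernelMajorant (hβ : 0 < β) : Integrable (kernelMajorant β) :=
  (integrable_norm_rpow_mul_exp_neg_mul_sq_norm volume (by positivity : 0 < β / 8)
    (by rw [finrank_E3]; norm_num)).const_mul _

lemma measurable_kernelMajorant : Measurable (kernelMajorant β) := by
  unfold kernelMajorant
  fun_prop

lemma kernelMass_nonneg (hβ : 0 < β) : 0 ≤ kernelMass β :=
  integral_nonneg (kernelMajorant_nonneg hβ)

lemma sqrt_Mβ_mul_eFun_div_le (hβ : 0 < β) (v v' : E3) :
    √(Mβ β v) * (eFun β v v' / ‖v' - v‖) ≤ √(Mβ β v') * kernelMajorant β (v' - v) := by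
  have hbal := mul_le_mul_of_nonneg_left (detailed_balance_exponent_le v v')
    (by positivity : 0 ≤ β / 2)
  calc √(Mβ β v) * (eFun β v v' / ‖v' - v‖)
      = √((β / (2 * π)) ^ ((3 : ℝ) / 2)) * (β / (2 * π)) ^ ((1 : ℝ) / 2) * ‖v' - v‖⁻¹ *
          exp (-(β / 4) * ‖v‖ ^ 2 + -(β / 2) * (inner ℝ v' (v' - v) / ‖v' - v‖) ^ 2) := by
        rw [sqrt_Mβ hβ, eFun, exp_add]
        ring
    _ ≤ √((β / (2 * π)) ^ ((3 : ℝ) / 2)) * (β / (2 * π)) ^ ((1 : ℝ) / 2) * ‖v' - v‖⁻¹ *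
          exp (-(β / 4) * ‖v'‖ ^ 2 + -(β / 8) * ‖v' - v‖ ^ 2) := by
        gcongr _ * exp ?_
        linarith
    _ = √(Mβ β v') * kernelMajorant β (v' - v) := by
        rw [sqrt_Mβ hβ, kernelMajorant, rpow_neg_one, exp_add]
        ring

end Kernel

theorem Fin.head_mul_prod_le_last_mul_prod {R : Type*} [CommSemiring R] [PartialOrder R]
    [IsOrderedRing R] {n : ℕ} (φ : Fin (n + 1) → R) {a b : Fin n → R}
    (ha : ∀ i, 0 ≤ a i) (hb : ∀ i, 0 ≤ b i) (h : ∀ i, φ i.castSucc * a i ≤ φ i.succ * b i) :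
    φ 0 * ∏ i, a i ≤ φ (Fin.last n) * ∏ i, b i := by
  induction n with
  | zero => simp
  | succ n ih =>
    have hchain := ih (φ ∘ Fin.castSucc) (fun i => ha _) (fun i => hb _) (fun i => h _)
    simp only [Function.comp_apply, Fin.castSucc_zero] at hchain
    rw [Fin.prod_univ_castSucc, Fin.prod_univ_castSucc]
    calc φ 0 * ((∏ i : Fin n, a i.castSucc) * a (Fin.last n))
        = (φ 0 * ∏ i : Fin n, a i.castSucc) * a (Fin.last n) := by ring
      _ ≤ (φ (Fin.last n).castSucc * ∏ i : Fin n, b i.castSucc) * a (Fin.last n) :=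
        mul_le_mul_of_nonneg_right hchain (ha _)
      _ = (∏ i : Fin n, b i.castSucc) * (φ (Fin.last n).castSucc * a (Fin.last n)) := by ring
      _ ≤ (∏ i : Fin n, b i.castSucc) * (φ (Fin.last n).succ * b (Fin.last n)) :=
        mul_le_mul_of_nonneg_left (h _) (Finset.prod_nonneg fun i _ => hb _)
      _ = φ (Fin.last (n + 1)) * ((∏ i : Fin n, b i.castSucc) * b (Fin.last n)) := by
        rw [Fin.succ_last]
        ring

theorem lintegral_prod_cons_sub_eq_pow {G : Type*} [AddGroup G] [MeasurableSpace G]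
    [MeasurableSub₂ G] [MeasurableAdd G] (μ : Measure G) [SigmaFinite μ] [μ.IsAddRightInvariant]
    {g : G → ℝ≥0∞} (hg : Measurable g) (n : ℕ) (x₀ : G) :
    ∫⁻ w : Fin n → G, ∏ i : Fin n,
        g ((Fin.cons x₀ w : Fin (n + 1) → G) i.succ - (Fin.cons x₀ w : Fin (n + 1) → G) i.castSucc)
      ∂Measure.pi (fun _ => μ) = (∫⁻ x, g x ∂μ) ^ n := by
  induction n generalizing x₀ with
  | zero => simp
  | succ n ih =>
    have hcons := (MeasurableEquiv.piFinSuccAbove (fun _ : Fin (n + 1) => G) 0).symm.measurable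
    simp only [MeasurableEquiv.piFinSuccAbove_symm_apply, Fin.insertNthEquiv,
      Fin.insertNth_zero, Equiv.coe_fn_mk] at hcons
    have hmeas : Measurable fun p : G × (Fin n → G) => ∏ i : Fin n,
        g ((Fin.cons p.1 p.2 : Fin (n + 1) → G) i.succ -
          (Fin.cons p.1 p.2 : Fin (n + 1) → G) i.castSucc) :=
      Finset.measurable_prod _ fun i _ => hg.comp <|
        ((measurable_pi_apply _).comp hcons).sub ((measurable_pi_apply _).comp hcons)
    calc _ = ∫⁻ p : G × (Fin n → G), g (p.1 - x₀) *
            ∏ i : Fin n, g ((Fin.cons p.1 p.2 : Fin (n + 1) → G) i.succ -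
              (Fin.cons p.1 p.2 : Fin (n + 1) → G) i.castSucc)
            ∂μ.prod (Measure.pi fun _ => μ) := by
          rw [← ((measurePreserving_piFinSuccAbove (fun _ => μ) 0).symm).lintegral_comp_emb
            (MeasurableEquiv.measurableEmbedding _)]
          simp only [MeasurableEquiv.piFinSuccAbove_symm_apply, Fin.insertNthEquiv,
            Fin.prod_univ_succ, Fin.insertNth_zero, Equiv.coe_fn_mk, Fin.cons_succ,
            Fin.cons_zero, Fin.castSucc_zero, ← Fin.succ_castSucc, cast_eq]
      _ = ∫⁻ x, g (x - x₀) * (∫⁻ x, g x ∂μ) ^ n ∂μ := by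
          rw [lintegral_prod _
            (by exact ((hg.comp (measurable_fst.sub_const x₀)).mul hmeas).aemeasurable)]
          refine lintegral_congr fun x => ?_
          dsimp only
          rw [lintegral_const_mul _ (by exact hmeas.comp measurable_prodMk_left), ih]
      _ = _ := by
          rw [lintegral_mul_const _ (by exact hg.comp (measurable_sub_const x₀)),
            lintegral_sub_right_eq_self, pow_succ']

def chainWeight (β : ℝ) {n : ℕ} (v₀ : E3) (w : Fin n → E3) : ℝ :=
  ∏ i : Fin n, eFun β (consV v₀ w i.castSucc) (consV v₀ w i.succ) /
    ‖consV v₀ w i.succ - consV v₀ w i.castSucc‖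

section Chain

variable {β : ℝ} {n : ℕ}

lemma chainWeight_nonneg (hβ : 0 < β) (v₀ : E3) (w : Fin n → E3) : 0 ≤ chainWeight β v₀ w :=
  Finset.prod_nonneg fun _ _ => div_nonneg (eFun_nonneg hβ _ _) (norm_nonneg _)

lemma chainWeight_le (hβ : 0 < β) (v₀ : E3) (w : Fin n → E3) :
    chainWeight β v₀ w ≤ √((β / (2 * π)) ^ ((3 : ℝ) / 2)) / √(Mβ β v₀) *
      ∏ i : Fin n, kernelMajorant β (consV v₀ w i.succ - consV v₀ w i.castSucc) := by
  have h := Fin.head_mul_prod_le_last_mul_prod (fun j => √(Mβ β (consV v₀ w j)))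
    (fun _ => div_nonneg (eFun_nonneg hβ _ _) (norm_nonneg _))
    (fun _ => kernelMajorant_nonneg hβ _) (fun _ => sqrt_Mβ_mul_eFun_div_le hβ _ _)
  rw [div_mul_eq_mul_div, le_div_iff₀ (sqrt_Mβ_pos hβ v₀), mul_comm]
  exact h.trans (mul_le_mul_of_nonneg_right (sqrt_Mβ_le hβ _)
    (Finset.prod_nonneg fun _ _ => kernelMajorant_nonneg hβ _))

lemma norm_integral_chainWeight_mul_le (hβ : 0 < β) (v₀ : E3) {X : (Fin n → E3) → ℝ}
    (hX : ∀ w, ‖X w‖ ≤ 1) :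
    ‖∫ w, chainWeight β v₀ w * X w‖ ≤
      √((β / (2 * π)) ^ ((3 : ℝ) / 2)) / √(Mβ β v₀) * kernelMass β ^ n := by
  set A := √((β / (2 * π)) ^ ((3 : ℝ) / 2)) / √(Mβ β v₀)
  have hA : 0 ≤ A := by positivity
  have hpt : ∀ w, ENNReal.ofReal ‖chainWeight β v₀ w * X w‖ ≤ ENNReal.ofReal A * ∏ i : Fin n,
      ENNReal.ofReal (kernelMajorant β (consV v₀ w i.succ - consV v₀ w i.castSucc)) := by
    intro w
    rw [← ENNReal.ofReal_prod_of_nonneg fun _ _ => kernelMajorant_nonneg hβ _,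
      ← ENNReal.ofReal_mul hA, norm_mul, norm_of_nonneg (chainWeight_nonneg hβ v₀ w)]
    exact ENNReal.ofReal_le_ofReal <|
      (mul_le_of_le_one_right (chainWeight_nonneg hβ v₀ w) (hX w)).trans (chainWeight_le hβ v₀ w)
  have hmass : ∫⁻ u, ENNReal.ofReal (kernelMajorant β u) = ENNReal.ofReal (kernelMass β) :=
    (ofReal_integral_eq_lintegral_ofReal (integrable_kernelMajorant hβ)
      (Filter.Eventually.of_forall (kernelMajorant_nonneg hβ))).symm
  have hchain : ∫⁻ w : Fin n → E3, ENNReal.ofReal A *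
      ∏ i : Fin n, ENNReal.ofReal (kernelMajorant β (consV v₀ w i.succ - consV v₀ w i.castSucc)) =
        ENNReal.ofReal (A * kernelMass β ^ n) := by
    rw [lintegral_const_mul' _ _ ENNReal.ofReal_ne_top, volume_pi, ENNReal.ofReal_mul hA,
      ENNReal.ofReal_pow (kernelMass_nonneg hβ), ← hmass]
    congr 1
    exact lintegral_prod_cons_sub_eq_pow volume measurable_kernelMajorant.ennreal_ofReal n v₀
  calc ‖∫ w, chainWeight β v₀ w * X w‖
      ≤ (∫⁻ w, ENNReal.ofReal ‖chainWeight β v₀ w * X w‖).toReal :=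
        norm_integral_le_lintegral_norm _
    _ ≤ (ENNReal.ofReal (A * kernelMass β ^ n)).toReal := by
        rw [← hchain]
        exact ENNReal.toReal_mono (hchain ▸ ENNReal.ofReal_ne_top) (lintegral_mono hpt)
    _ = A * kernelMass β ^ n :=
        ENNReal.toReal_ofReal (mul_nonneg hA (pow_nonneg (kernelMass_nonneg hβ) _))

end Chain

/-- The set `Δ_n(t)` over which `Psi` integrates the collision times. -/
def timeSimplex (n : ℕ) (t : ℝ) : Set (Fin n → ℝ) :=
  {τ | (∀ i, 0 ≤ τ i ∧ τ i ≤ t) ∧ ∀ i j : Fin n, i ≤ j → τ j ≤ τ i}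

section TimeSimplex

variable {n : ℕ} {t : ℝ} {τ : Fin n → ℝ}

lemma timeSimplex_subset_Icc : timeSimplex n t ⊆ Icc 0 fun _ => t :=
  fun _ hτ => ⟨fun i => (hτ.1 i).1, fun i => (hτ.1 i).2⟩

lemma norm_setIntegral_timeSimplex_le (ht : 0 ≤ t) {F : (Fin n → ℝ) → ℝ} {B : ℝ} (hB : 0 ≤ B)
    (hF : ∀ τ ∈ timeSimplex n t, ‖F τ‖ ≤ B) :
    ‖∫ τ in timeSimplex n t, F τ‖ ≤ B * t ^ n := by
  have hfin : volume (Icc (0 : Fin n → ℝ) fun _ => t) ≠ ∞ := isCompact_Icc.measure_lt_top.ne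
  have hvol : volume.real (timeSimplex n t) ≤ t ^ n := by
    refine (measureReal_mono timeSimplex_subset_Icc hfin).trans_eq ?_
    rw [measureReal_def, Real.volume_Icc_pi_toReal (a := 0) fun _ => ht]
    simp
  calc ‖∫ τ in timeSimplex n t, F τ‖ ≤ B * volume.real (timeSimplex n t) :=
        norm_setIntegral_le_of_norm_le_const
          ((measure_mono timeSimplex_subset_Icc).trans_lt hfin.lt_top) hF
    _ ≤ B * t ^ n := mul_le_mul_of_nonneg_left hvol hB

lemma consT_succ_le_castSucc (hτ : τ ∈ timeSimplex n t) (i : Fin n) :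
    consT t τ i.succ ≤ consT t τ i.castSucc := by
  cases n with
  | zero => exact i.elim0
  | succ m =>
    cases i using Fin.cases with
    | zero => simpa [consT] using (hτ.1 0).2
    | succ j =>
      simpa [consT, ← Fin.succ_castSucc] using hτ.2 _ _ (Fin.castSucc_lt_succ (i := j)).le

lemma consT_last_nonneg (ht : 0 ≤ t) (hτ : τ ∈ timeSimplex n t) : 0 ≤ consT t τ (Fin.last n) := by
  cases n with
  | zero => simpa [consT] using ht
  | succ m => simpa [consT, ← Fin.succ_last] using (hτ.1 _).1

lemma norm_exp_neg_mul_sojourn_le_one {μ : ℝ} (hμ : 0 ≤ μ) (ht : 0 ≤ t)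
    (hτ : τ ∈ timeSimplex n t) {ℓ : Fin (n + 1) → ℝ} (hℓ : ∀ i, 0 ≤ ℓ i) :
    ‖exp (-(μ * ((∑ i : Fin n, ℓ i.castSucc * (consT t τ i.castSucc - consT t τ i.succ)) +
      ℓ (Fin.last n) * consT t τ (Fin.last n))))‖ ≤ 1 := by
  rw [norm_of_nonneg (exp_nonneg _), exp_le_one_iff, neg_nonpos]
  refine mul_nonneg hμ (add_nonneg (Finset.sum_nonneg fun i _ => ?_) ?_)
  · exact mul_nonneg (hℓ _) (sub_nonneg.2 (consT_succ_le_castSucc hτ i))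
  · exact mul_nonneg (hℓ _) (consT_last_nonneg ht hτ)

end TimeSimplex

theorem abs_Psi_succ_le {β μ t : ℝ} (hβ : 0 < β) (hμ : 0 ≤ μ) (ht : 0 ≤ t) (n : ℕ) :
    |Psi β μ t (n + 1)| ≤ √((β / (2 * π)) ^ ((3 : ℝ) / 2)) * (∫ v, √(Mβ β v)) *
      (kernelMass β * (μ * t)) ^ (n + 1) := by
  set m := √((β / (2 * π)) ^ ((3 : ℝ) / 2))
  have hmaj : ∀ v₀ : E3, ‖Mβ β v₀ * ∫ τ in timeSimplex (n + 1) t, ∫ w : Fin (n + 1) → E3,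
      chainWeight β v₀ w * exp (-(μ * ((∑ i : Fin (n + 1),
        lam β (consV v₀ w i.castSucc) * (consT t τ i.castSucc - consT t τ i.succ)) +
          lam β (consV v₀ w (Fin.last (n + 1))) * consT t τ (Fin.last (n + 1)))))‖ ≤
        m * kernelMass β ^ (n + 1) * t ^ (n + 1) * √(Mβ β v₀) := by
    intro v₀
    rw [norm_mul, norm_of_nonneg (Mβ_nonneg hβ v₀)]
    refine (mul_le_mul_of_nonneg_left (norm_setIntegral_timeSimplex_le ht
      (mul_nonneg (div_nonneg (sqrt_nonneg _) (sqrt_nonneg _))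
        (pow_nonneg (kernelMass_nonneg hβ) _))
      fun τ hτ => norm_integral_chainWeight_mul_le hβ v₀ fun w =>
        norm_exp_neg_mul_sojourn_le_one hμ ht hτ fun i => lam_nonneg hβ _)
      (Mβ_nonneg hβ v₀)).trans_eq ?_
    calc Mβ β v₀ * (m / √(Mβ β v₀) * kernelMass β ^ (n + 1) * t ^ (n + 1))
        = Mβ β v₀ / √(Mβ β v₀) * (m * kernelMass β ^ (n + 1) * t ^ (n + 1)) := by ring
      _ = _ := by rw [div_sqrt, mul_comm]
  rw [Psi, abs_mul, abs_pow, abs_of_nonneg hμ, ← norm_eq_abs]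
  calc μ ^ (n + 1) * ‖∫ v₀, _‖
      ≤ μ ^ (n + 1) * ∫ v₀, m * kernelMass β ^ (n + 1) * t ^ (n + 1) * √(Mβ β v₀) := by
        gcongr
        exact norm_integral_le_of_norm_le ((integrable_sqrt_Mβ hβ).const_mul _)
          (Filter.Eventually.of_forall hmaj)
    _ = m * (∫ v, √(Mβ β v)) * (kernelMass β * (μ * t)) ^ (n + 1) := by
        rw [integral_const_mul]
        ring

theorem summable_and_tsum_le_of_abs_le_geometric {a : ℕ → ℝ} {K q : ℝ} (hq₀ : 0 ≤ q)
    (hq : q ≤ 1 / 2) (ha : ∀ n, |a n| ≤ K * q ^ (n + 2)) :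
    Summable a ∧ ∑' n, a n ≤ 2 * K * q ^ 2 := by
  have hq₁ : q < 1 := by linarith
  have hbound : ∀ n, ‖a n‖ ≤ K * q ^ 2 * q ^ n := fun n => by
    rw [norm_eq_abs, mul_assoc, ← pow_add, add_comm]
    exact ha n
  have hgeom := (summable_geometric_of_lt_one hq₀ hq₁).mul_left (K * q ^ 2)
  have hsum : Summable a := hgeom.of_norm_bounded hbound
  have hKq : 0 ≤ K * q ^ 2 := by simpa using (abs_nonneg _).trans (ha 0)
  refine ⟨hsum, ?_⟩
  calc ∑' n, a n ≤ ∑' n, K * q ^ 2 * q ^ n :=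
        hsum.tsum_le_tsum (fun n => (le_abs_self _).trans (norm_eq_abs (a n) ▸ hbound n)) hgeom
    _ = K * q ^ 2 * (1 - q)⁻¹ := by rw [tsum_mul_left, tsum_geometric_of_lt_one hq₀ hq₁]
    _ ≤ K * q ^ 2 * 2 := by
        gcongr
        rw [inv_le_comm₀ (by linarith) two_pos]
        linarith
    _ = 2 * K * q ^ 2 := by ring

/-- The total weight of trajectories with at least two collisions up to time `t` for the
stationary linear Boltzmann jump process is of order `(μt)²` for short times: there are
`C, c > 0` (depending only on `β`) such that for all `μ > 0`, `t ≥ 0` with `μt ≤ c`, the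
tail series `Σ_{n≥2} Ψ_n(μ,t)` converges and `Σ_{n≥2} Ψ_n(μ,t) ≤ C (μt)²`. -/
theorem tail_weight_two_collisions_short_time (β : ℝ) (hβ : 0 < β) :
    ∃ C c : ℝ, 0 < C ∧ 0 < c ∧ ∀ μ t : ℝ, 0 < μ → 0 ≤ t → μ * t ≤ c →
      Summable (fun n : ℕ => Psi β μ t (n + 2)) ∧
      (∑' n : ℕ, Psi β μ t (n + 2)) ≤ C * (μ * t) ^ 2 := by
  set K := √((β / (2 * π)) ^ ((3 : ℝ) / 2)) * ∫ v, √(Mβ β v)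
  set Γ := kernelMass β
  have hK : 0 ≤ K := mul_nonneg (sqrt_nonneg _) (integral_nonneg fun _ => sqrt_nonneg _)
  have hΓ : 0 ≤ Γ := kernelMass_nonneg hβ
  refine ⟨2 * K * (Γ + 1) ^ 2 + 1, 1 / (2 * (Γ + 1)), by positivity, by positivity,
    fun μ t hμ ht hμt => ?_⟩
  have hq : (Γ + 1) * (μ * t) ≤ 1 / 2 := by
    calc (Γ + 1) * (μ * t) ≤ (Γ + 1) * (1 / (2 * (Γ + 1))) := by gcongr
      _ = 1 / 2 := by field_simp
  obtain ⟨hsum, htsum⟩ := summable_and_tsum_le_of_abs_le_geometric (by positivity) hq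
    fun n => (abs_Psi_succ_le hβ hμ.le ht (n + 1)).trans (by gcongr; linarith)
  refine ⟨hsum, htsum.trans ?_⟩
  nlinarith [sq_nonneg (μ * t)]
end
end
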